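/- For all integers m ≥ 1 and x ≥ 1 and every codeword c ∈ C(m,x), the bitwise complement c̄ of c (obtained by flipping every bit of c) is also a codeword of C(m,x), and its index satisfies g(c̄) = N(m,x) − 1 − g(c); in particular, for a codeword c⁰ starting with 0 from the left, the codeword indexed by N(m,x) − 1 − g(c⁰) is exactly the complement of c⁰. -/

import Mathlib

/-- `noForbidden m x c` says the binary word `c = (c_{m-1}, …, c_0)` contains no contiguous
subword of the form `0 1^y 0` or `1 0^y 1` for any `1 ≤ y ≤ x`. -/
def noForbidden (m x : ℕ) (c : Fin m → Bool) : Prop :=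
  ∀ j y : ℕ, 1 ≤ y → y ≤ x → (h : j + y + 1 < m) →
    ¬ ((∀ k, 1 ≤ k → (hk : k ≤ y) → c ⟨j + k, by omega⟩ = ! c ⟨j, by omega⟩) ∧
        c ⟨j + y + 1, h⟩ = c ⟨j, by omega⟩)

/-- `N(m, x)`: the cardinality of the LOCO code `C(m, x)`. -/
noncomputable def locoN (m x : ℕ) : ℕ := Nat.card {c : Fin m → Bool // noForbidden m x c}

/-- `N(k, x)` extended to integer `k` by the convention `N(k, x) = 2` for `k ≤ 1`. -/
noncomputable def Nex (k : ℤ) (x : ℕ) : ℤ := if k ≤ 1 then 2 else (locoN k.toNat x : ℤ)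

/-- Strict lexicographic order on binary words, comparing bits from `c_{m-1}`
(most significant) down to `c_0`, with `0 < 1`. -/
def lexLt (m : ℕ) (d c : Fin m → Bool) : Prop :=
  ∃ i : Fin m, d i = false ∧ c i = true ∧ ∀ j : Fin m, (i : ℕ) < (j : ℕ) → d j = c j

/-- The index `g(m, x, c)` of a codeword: the number of codewords of `C(m, x)` that
precede `c` in lexicographic order. -/
noncomputable def locoIdx (m x : ℕ) (c : Fin m → Bool) : ℕ :=
  Nat.card {d : Fin m → Bool // noForbidden m x d ∧ lexLt m d c}

/-! Complementation is an involution of `C(m, x)`, since it permutes the forbidden patterns,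
and it reverses the lexicographic order. Hence it maps the codewords preceding `c̄` bijectively
onto those following `c`; together with the `g(c)` codewords preceding `c` and `c` itself these
are all `N(m, x)` codewords. -/

open Finset Function

section CountingByRank

variable {α : Type*} (r : α → α → Prop)

theorem card_rel_add_card_rel_swap_add_one [Finite α] [IsStrictTotalOrder α r] {p : α → Prop}
    {c : α} (hc : p c) :
    Nat.card {d // p d ∧ r d c} + Nat.card {d // p d ∧ r c d} + 1 = Nat.card {d // p d} := by
  classical
  have := Fintype.ofFinite α
  simp only [Nat.card_eq_fintype_card, Fintype.card_subtype, ← filter_filter]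
  have hrest : (univ.filter p).filter (¬ r · c) = insert c ((univ.filter p).filter (r c ·)) := by
    ext d
    have := trichotomous_of r d c
    simp only [mem_filter, mem_univ, true_and, mem_insert]
    constructor
    · rintro ⟨hd, hdc⟩
      tauto
    · rintro (rfl | ⟨hd, hcd⟩)
      · exact ⟨hc, irrefl d⟩
      · exact ⟨hd, asymm hcd⟩
  rw [← card_filter_add_card_filter_not (s := univ.filter p) (r · c), hrest,
    card_insert_of_notMem (by simp [irrefl])]
  ring

theorem card_rel_apply_eq_card_rel_swap {σ : α → α} (hσ : Involutive σ)
    (hr : ∀ a b, r (σ a) (σ b) ↔ r b a) {p : α → Prop} (hp : ∀ a, p (σ a) ↔ p a) (c : α) :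
    Nat.card {d // p d ∧ r d (σ c)} = Nat.card {d // p d ∧ r c d} :=
  Nat.card_congr <| (hσ.toPerm σ).subtypeEquiv fun d => by
    rw [Involutive.coe_toPerm, hp, ← hr, hσ]

end CountingByRank

theorem lexLt_iff_toColex_lt {m : ℕ} {d c : Fin m → Bool} :
    lexLt m d c ↔ toColex d < toColex c := by
  change _ ↔ ∃ i, (∀ j, i < j → d j = c j) ∧ d i < c i
  simp only [lexLt, Bool.lt_iff, Fin.lt_def]
  exact exists_congr fun i => by tauto

instance (m : ℕ) : IsStrictTotalOrder (Fin m → Bool) (lexLt m) :=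
  -- The `<` of `Colex` is the one of its `LinearOrder` only up to unfolding `id`, which
  -- instance search does not do.
  have : IsStrictTotalOrder (Colex (Fin m → Bool)) (· < ·) := by exact instIsStrictTotalOrderLt
  (⟨toColex.toEmbedding, lexLt_iff_toColex_lt.symm⟩ :
    lexLt m ↪r ((· < ·) : Colex (Fin m → Bool) → Colex (Fin m → Bool) → Prop)).isStrictTotalOrder

theorem lexLt_not_iff {m : ℕ} {d c : Fin m → Bool} :
    lexLt m (fun i => ! d i) (fun i => ! c i) ↔ lexLt m c d := by
  simp only [lexLt, Bool.not_inj_iff]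
  grind

theorem noForbidden_not_iff {m x : ℕ} {c : Fin m → Bool} :
    noForbidden m x (fun i => ! c i) ↔ noForbidden m x c := by
  simp [noForbidden]

theorem loco_complement_index (m x : ℕ)
    (c : Fin m → Bool) (hc : noForbidden m x c) :
    noForbidden m x (fun i => ! c i) ∧
    (locoIdx m x (fun i => ! c i) : ℤ) = (locoN m x : ℤ) - 1 - (locoIdx m x c : ℤ) := by
  have hnot : Involutive fun (d : Fin m → Bool) i => ! d i :=
    fun d => funext fun i => Bool.not_not (d i)
  have hsplit := card_rel_add_card_rel_swap_add_one (lexLt m) hc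
  have hflip := card_rel_apply_eq_card_rel_swap (lexLt m) hnot (fun _ _ => lexLt_not_iff)
    (fun _ => noForbidden_not_iff (x := x)) c
  refine ⟨noForbidden_not_iff.2 hc, ?_⟩
  unfold locoIdx locoN
  omega
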